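/- Let c(n) be the number of permutations of [n] all of whose alternating runs have length less than 3 and whose last alternating run has length 1 (for n ≥ 2 this means: every i ∈ {1,…,n−2} has i or i+1 an alternating descent, and n−1 is an alternating descent; c(0)=0, c(1)=1). Then in ℚ⟦X⟧: (Σ_{n=0}^∞ (E_{3n}·X^{3n}/(3n)! − E_{3n+1}·X^{3n+1}/(3n+1)!)) · (Σ_{n=0}^∞ c(n)·Xⁿ/n!) = Σ_{n=0}^∞ (E_{3n+1}·X^{3n+1}/(3n+1)! − E_{3n+2}·X^{3n+2}/(3n+2)!). -/

import Mathlib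

/-- The entry of the permutation `σ` of `[n]` at (1-based) position `i`,
as a value in `{1, …, n}`; `0` if `i` is out of range. -/
def permEnt {n : ℕ} (σ : Equiv.Perm (Fin n)) (i : ℕ) : ℕ :=
  if h : 1 ≤ i ∧ i ≤ n then (σ ⟨i - 1, by omega⟩ : ℕ) + 1 else 0

/-- `i` is a descent of `σ`: `1 ≤ i ≤ n−1` and `π_i > π_{i+1}`. -/
def IsDescent {n : ℕ} (σ : Equiv.Perm (Fin n)) (i : ℕ) : Prop :=
  1 ≤ i ∧ i < n ∧ permEnt σ (i + 1) < permEnt σ i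

/-- `i` is an alternating descent of `σ`: `i` odd with `π_i > π_{i+1}`,
or `i` even with `π_i < π_{i+1}`. -/
def IsAltDescent {n : ℕ} (σ : Equiv.Perm (Fin n)) (i : ℕ) : Prop :=
  1 ≤ i ∧ i < n ∧
    ((i % 2 = 1 ∧ permEnt σ (i + 1) < permEnt σ i) ∨
     (i % 2 = 0 ∧ permEnt σ i < permEnt σ (i + 1)))

instance {n : ℕ} (σ : Equiv.Perm (Fin n)) (i : ℕ) : Decidable (IsDescent σ i) := by
  unfold IsDescent; infer_instance

instance {n : ℕ} (σ : Equiv.Perm (Fin n)) (i : ℕ) : Decidable (IsAltDescent σ i) := by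
  unfold IsAltDescent; infer_instance

/-- `i` is a peak of `σ`: `2 ≤ i ≤ n−1` and `π_{i−1} < π_i > π_{i+1}`. -/
def IsPeak {n : ℕ} (σ : Equiv.Perm (Fin n)) (i : ℕ) : Prop :=
  2 ≤ i ∧ i < n ∧ permEnt σ (i - 1) < permEnt σ i ∧ permEnt σ (i + 1) < permEnt σ i

/-- `i` is a valley of `σ`: `2 ≤ i ≤ n−1` and `π_{i−1} > π_i < π_{i+1}`. -/
def IsValley {n : ℕ} (σ : Equiv.Perm (Fin n)) (i : ℕ) : Prop :=
  2 ≤ i ∧ i < n ∧ permEnt σ i < permEnt σ (i - 1) ∧ permEnt σ i < permEnt σ (i + 1)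

/-- All valleys of `σ` are even and all peaks of `σ` are odd. -/
def GoodPerm {n : ℕ} (σ : Equiv.Perm (Fin n)) : Prop :=
  (∀ i, IsValley σ i → i % 2 = 0) ∧ (∀ i, IsPeak σ i → i % 2 = 1)

/-- `f n` is the number of permutations of `[n]` with all valleys even and all peaks odd. -/
noncomputable def fCount (n : ℕ) : ℕ :=
  Nat.card {σ : Equiv.Perm (Fin n) // GoodPerm σ}

/-- `g n` is the number of permutations of `[n]` with all valleys even and all peaks odd
having no descent at position `n − 1`. -/
noncomputable def gCount (n : ℕ) : ℕ :=
  Nat.card {σ : Equiv.Perm (Fin n) // GoodPerm σ ∧ ¬ IsDescent σ (n - 1)}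

/-- `σ` is an alternating permutation: `π₁ > π₂ < π₃ > π₄ < ⋯`. -/
def IsAltPerm {n : ℕ} (σ : Equiv.Perm (Fin n)) : Prop :=
  ∀ i, 1 ≤ i → i < n →
    (i % 2 = 1 → permEnt σ (i + 1) < permEnt σ i) ∧
    (i % 2 = 0 → permEnt σ i < permEnt σ (i + 1))

/-- The Euler number `Eₙ`, the number of alternating permutations of `[n]`. -/
noncomputable def eulerNum (n : ℕ) : ℕ :=
  Nat.card {σ : Equiv.Perm (Fin n) // IsAltPerm σ}

/-- `cCount n`: the number of permutations of `[n]` all of whose alternating runs have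
length less than 3 and whose last alternating run has length 1. -/
noncomputable def cCount (n : ℕ) : ℕ :=
  Nat.card {σ : Equiv.Perm (Fin n) //
    (∀ i, 1 ≤ i → i ≤ n - 2 → (IsAltDescent σ i ∨ IsAltDescent σ (i + 1))) ∧
    (n = 1 ∨ IsAltDescent σ (n - 1))}

/-!
Encode a permutation of `[n]` by its word `w ∈ {0,1}ⁿ⁻¹` of alternating descents. Leaving
position `j` free, the letters before and after it are the words of two independent
permutations of `[j]` and `[n - j]`, merged in `C(n, j)` ways (the second word is complemented
when `j` is odd, which does not change counts). With `Kₖ` the number of permutations whose word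
is `0ᵏ 1 v` with `v` having short runs, splitting the words `0ᵏ b v` according to the shape of
`v` gives `C(n, k+1) E_{k+1} c(n-k-1) = Kₖ + K_{k+1} + K_{k+2} + [k + 2 = n] Eₙ`, while
`c(n) = K₀ + K₁`. Summing against the period-3 signs `1, -1, 0` telescopes to
`∑_d ±C(n, d) E_d c(n-d) = ±Eₙ`, the coefficientwise form of the product of exponential
generating functions.
-/

open Equiv

section AltDescentWord

variable {n : ℕ}

lemma isAltDescent_succ_iff (σ : Perm (Fin n)) {i : ℕ} (h : i + 1 < n) :
    IsAltDescent σ (i + 1) ↔ (σ ⟨i, by omega⟩ < σ ⟨i + 1, h⟩ ↔ i % 2 = 1) := by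
  have hne : σ ⟨i, by omega⟩ ≠ σ ⟨i + 1, h⟩ := fun he => by simpa using σ.injective he
  have hne' := Fin.val_ne_of_ne hne
  simp only [IsAltDescent, permEnt, Fin.lt_def]
  rw [dif_pos (by omega), dif_pos (by omega)]
  simp only [Nat.add_sub_cancel]
  omega

/-- Entry `i` (0-based) records whether position `i + 1` is an alternating descent. -/
def altDescents (σ : Perm (Fin n)) : List Bool :=
  List.ofFn fun i : Fin (n - 1) => decide (IsAltDescent σ (i + 1))

@[simp]
lemma length_altDescents (σ : Perm (Fin n)) : (altDescents σ).length = n - 1 := by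
  simp [altDescents]

@[simp]
lemma getElem_altDescents (σ : Perm (Fin n)) (i : ℕ) (h : i < (altDescents σ).length) :
    (altDescents σ)[i] = decide (IsAltDescent σ (i + 1)) := by
  simp [altDescents]

/-- Appending `false` records that position `n` is never an alternating descent. -/
lemma getElem?_altDescents_append_false (σ : Perm (Fin n)) (hn : 1 ≤ n) (k : ℕ) :
    (altDescents σ ++ [false])[k]? =
      if k < n then some (decide (IsAltDescent σ (k + 1))) else none := by
  rcases lt_trichotomy k (n - 1) with hk | rfl | hk
  · rw [List.getElem?_append_left (by simpa using hk)]
    simp [List.getElem?_eq_getElem (by simpa using hk : k < (altDescents σ).length),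
      show k < n by omega]
  · simp [show n - 1 < n by omega, Nat.sub_add_cancel hn, IsAltDescent]
  · rw [List.getElem?_eq_none (by simp; omega)]
    simp [show ¬ k < n by omega]

lemma altDescents_trans_revPerm (σ : Perm (Fin n)) :
    altDescents (σ.trans Fin.revPerm) = (altDescents σ).map not := by
  refine List.ext_getElem (by simp) fun i h₁ _ => ?_
  have hi : i + 1 < n := by simp at h₁; omega
  have hne : σ ⟨i, by omega⟩ ≠ σ ⟨i + 1, hi⟩ := fun he => by simpa using σ.injective he
  simp only [getElem_altDescents, List.getElem_map, isAltDescent_succ_iff _ hi,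
    trans_apply, Fin.revPerm_apply, Fin.rev_lt_rev]
  rcases lt_or_gt_of_ne hne with hlt | hlt <;> rcases Nat.mod_two_eq_zero_or_one i with h | h <;>
    simp [hlt, hlt.le, not_lt.mpr, h]

lemma isAltPerm_iff_altDescents (σ : Perm (Fin n)) :
    IsAltPerm σ ↔ altDescents σ = List.replicate (n - 1) true := by
  have hiff : IsAltPerm σ ↔ ∀ i, 1 ≤ i → i < n → IsAltDescent σ i := by
    refine forall_congr' fun i => imp_congr_right fun h₁ => imp_congr_right fun h₂ => ?_
    simp only [IsAltDescent, h₁, h₂, true_and]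
    rcases Nat.mod_two_eq_zero_or_one i with h | h <;> simp [h]
  rw [hiff, List.eq_replicate_iff]
  simp only [length_altDescents, true_and, List.forall_mem_iff_getElem, getElem_altDescents,
    decide_eq_true_eq]
  constructor
  · intro h i hi
    exact h (i + 1) (by omega) (by omega)
  · intro h i h₁ h₂
    simpa [show i - 1 + 1 = i by omega] using h (i - 1) (by omega)

end AltDescentWord

section Counting

variable {n : ℕ}

noncomputable def altDescCount (n : ℕ) (P : List Bool → Prop) : ℕ :=
  Nat.card {σ : Perm (Fin n) // P (altDescents σ)}

lemma altDescCount_congr {P Q : List Bool → Prop}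
    (h : ∀ w : List Bool, w.length = n - 1 → (P w ↔ Q w)) :
    altDescCount n P = altDescCount n Q :=
  Nat.card_congr <| subtypeEquivRight fun σ => h _ (length_altDescents σ)

lemma altDescCount_or {P Q : List Bool → Prop} (h : ∀ w, P w → ¬ Q w) :
    altDescCount n (fun w => P w ∨ Q w) = altDescCount n P + altDescCount n Q := by
  classical
  simp only [altDescCount, Nat.card_eq_fintype_card]
  exact Fintype.card_subtype_or_disjoint _ _ fun _ hP hQ σ hσ => h _ (hP σ hσ) (hQ σ hσ)

lemma altDescCount_eq_zero {P : List Bool → Prop}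
    (h : ∀ w : List Bool, w.length = n - 1 → ¬ P w) : altDescCount n P = 0 :=
  Nat.card_eq_zero.2 <| .inl ⟨fun σ => h _ (length_altDescents σ.1) σ.2⟩

lemma altDescCount_map_not (P : List Bool → Prop) :
    altDescCount n (fun w => P (w.map not)) = altDescCount n P :=
  Nat.card_congr <| subtypeEquiv (Equiv.mulLeft Fin.revPerm) fun σ => by
    simp [← altDescents_trans_revPerm, Perm.mul_def]

lemma altDescCount_of_forall {P : List Bool → Prop}
    (h : ∀ w : List Bool, w.length = n - 1 → P w) : altDescCount n P = n.factorial := by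
  rw [altDescCount, Nat.card_congr (subtypeUnivEquiv fun σ => h _ (length_altDescents σ))]
  simp [Nat.card_eq_fintype_card, Fintype.card_perm]

lemma altDescCount_map_xor (c : Bool) (P : List Bool → Prop) :
    altDescCount n (fun w => P (w.map (· ^^ c))) = altDescCount n P := by
  cases c
  · simp
  · simpa using altDescCount_map_not P

lemma eulerNum_eq_altDescCount_true (n : ℕ) :
    eulerNum n = altDescCount n (· = List.replicate (n - 1) true) :=
  Nat.card_congr <| subtypeEquivRight fun σ => isAltPerm_iff_altDescents σ

lemma eulerNum_eq_altDescCount_false (n : ℕ) :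
    eulerNum n = altDescCount n (· = List.replicate (n - 1) false) := by
  rw [eulerNum_eq_altDescCount_true, ← altDescCount_map_not]
  refine altDescCount_congr fun w _ => ?_
  rw [show List.replicate (n - 1) true = (List.replicate (n - 1) false).map not by simp,
    (List.map_injective_iff.2 Bool.not_injective).eq_iff]

end Counting

/-- No two consecutive alternating ascents, and no alternating ascent at the end: in terms of
alternating runs, all runs have length less than `3` and the last run has length `1`. -/
def ShortRuns (w : List Bool) : Prop := ¬ [false, false] <:+: w ++ [false]

lemma shortRuns_altDescents_iff {n : ℕ} (σ : Perm (Fin n)) (hn : 1 ≤ n) :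
    ShortRuns (altDescents σ) ↔
      ∀ k, k + 2 ≤ n → IsAltDescent σ (k + 1) ∨ IsAltDescent σ (k + 2) := by
  simp only [ShortRuns, List.infix_iff_getElem?, getElem?_altDescents_append_false σ hn]
  rw [← not_iff_not, not_not]
  push Not
  constructor
  · rintro ⟨k, hk, hw⟩
    have h₀ := hw 0 (by simp)
    have h₁ := hw 1 (by simp)
    simp only [length_altDescents, List.length_append, List.length_cons, List.length_nil] at hk
    simp only [zero_add, show 1 + k = k + 1 by omega, show k < n by omega, show k + 1 < n by omega,
      if_true] at h₀ h₁
    exact ⟨k, by omega, by simpa using h₀, by simpa [add_assoc] using h₁⟩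
  · rintro ⟨k, hk, h₁, h₂⟩
    refine ⟨k, by simp; omega, fun i hi => ?_⟩
    simp only [List.length_cons, List.length_nil] at hi
    interval_cases i <;>
      simp [show k < n by omega, show k + 1 < n by omega, add_comm 1 k, h₁, h₂]

lemma cCount_eq_altDescCount {n : ℕ} (hn : 1 ≤ n) : cCount n = altDescCount n ShortRuns := by
  refine Nat.card_congr <| subtypeEquivRight fun σ => ?_
  rw [shortRuns_altDescents_iff σ hn]
  constructor
  · rintro ⟨hpairs, hlast⟩ k hk
    rcases hk.lt_or_eq with hk | rfl
    · exact hpairs (k + 1) (by omega) (by omega)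
    · exact .inl (hlast.resolve_left (by omega))
  · intro h
    refine ⟨fun i h₁ h₂ => ?_, ?_⟩
    · have := h (i - 1) (by omega)
      rwa [show i - 1 + 1 = i by omega, show i - 1 + 2 = i + 1 by omega] at this
    · rcases hn.eq_or_lt with rfl | hn
      · exact .inl rfl
      · have := h (n - 2) (by omega)
        rw [show n - 2 + 1 = n - 1 by omega, show n - 2 + 2 = n by omega] at this
        exact .inr (this.resolve_right fun h => (lt_irrefl n h.2.1))

lemma eulerNum_of_le_one {n : ℕ} (hn : n ≤ 1) : eulerNum n = 1 := by
  rw [eulerNum_eq_altDescCount_true, altDescCount_of_forall fun w hw => ?_]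
  · interval_cases n <;> rfl
  · simp [List.length_eq_zero_iff.1 (by omega : w.length = 0), show n - 1 = 0 by omega]

lemma cCount_zero : cCount 0 = 0 :=
  Nat.card_eq_zero.2 <| .inl ⟨fun σ => by simpa [IsAltDescent] using σ.2.2⟩

lemma cCount_one : cCount 1 = 1 := by
  rw [cCount_eq_altDescCount le_rfl, altDescCount_of_forall fun w hw => ?_]
  · rfl
  · rw [List.length_eq_zero_iff.1 hw]
    exact fun h => by simpa using h.length_le

section Shuffle

variable {j m : ℕ} {A : Finset (Fin (j + m))}

lemma card_compl_of_card_eq (hA : A.card = j) : Aᶜ.card = m := by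
  rw [Finset.card_compl, hA, Fintype.card_fin, Nat.add_sub_cancel_left]

variable (A) (hA : A.card = j)

noncomputable def shuffleValues : Fin j ⊕ Fin m ≃ Fin (j + m) :=
  (sumCongr (A.orderIsoOfFin hA).toEquiv
      (Aᶜ.orderIsoOfFin (card_compl_of_card_eq hA)).toEquiv).trans
    ((sumCongr (Equiv.refl _) (subtypeEquivRight fun _ => Finset.mem_compl)).trans
      (sumCompl (· ∈ A)))

/-- The permutation of `[j + m]` that is order-isomorphic to `u` on the first `j` positions
and to `v` on the last `m`, and takes the values in `A` on the first `j` positions. -/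
noncomputable def shuffle (u : Perm (Fin j)) (v : Perm (Fin m)) : Perm (Fin (j + m)) :=
  finSumFinEquiv.symm.trans ((sumCongr u v).trans (shuffleValues A hA))

variable (u : Perm (Fin j)) (v : Perm (Fin m))

lemma shuffle_castAdd (x : Fin j) :
    shuffle A hA u v (Fin.castAdd m x) = A.orderIsoOfFin hA (u x) := by
  simp [shuffle, shuffleValues]

lemma shuffle_natAdd (y : Fin m) :
    shuffle A hA u v (Fin.natAdd j y) = Aᶜ.orderIsoOfFin (card_compl_of_card_eq hA) (v y) := by
  simp [shuffle, shuffleValues]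

lemma shuffle_mem_iff (x : Fin (j + m)) : shuffle A hA u v x ∈ A ↔ (x : ℕ) < j := by
  induction x using Fin.addCases with
  | left x => simp [shuffle_castAdd]
  | right y =>
    simpa [shuffle_natAdd] using
      Finset.mem_compl.1 (Aᶜ.orderIsoOfFin (card_compl_of_card_eq hA) (v y)).2

lemma shuffle_castAdd_lt_iff (x x' : Fin j) :
    shuffle A hA u v (Fin.castAdd m x) < shuffle A hA u v (Fin.castAdd m x') ↔ u x < u x' := by
  simp [shuffle_castAdd]

lemma shuffle_natAdd_lt_iff (y y' : Fin m) :
    shuffle A hA u v (Fin.natAdd j y) < shuffle A hA u v (Fin.natAdd j y') ↔ v y < v y' := by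
  simp [shuffle_natAdd]

lemma altDescents_shuffle_take :
    (altDescents (shuffle A hA u v)).take (j - 1) = altDescents u := by
  refine List.ext_getElem (by simp; omega) fun i _ h₂ => ?_
  have hi : i + 1 < j := by simp at h₂; omega
  rw [List.getElem_take, getElem_altDescents, getElem_altDescents]
  simp only [isAltDescent_succ_iff _ (by omega : i + 1 < j + m), isAltDescent_succ_iff _ hi]
  exact decide_eq_decide.2
    (iff_congr (shuffle_castAdd_lt_iff A hA u v ⟨i, by omega⟩ ⟨i + 1, hi⟩) Iff.rfl)

lemma altDescents_shuffle_drop :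
    (altDescents (shuffle A hA u v)).drop j =
      (altDescents v).map (· ^^ decide (j % 2 = 1)) := by
  refine List.ext_getElem (by simp; omega) fun i _ h₂ => ?_
  have hi : i + 1 < m := by simp at h₂; omega
  rw [List.getElem_drop, List.getElem_map, getElem_altDescents, getElem_altDescents]
  simp only [isAltDescent_succ_iff _ (by omega : j + i + 1 < j + m), isAltDescent_succ_iff _ hi]
  change decide (shuffle A hA u v (Fin.natAdd j ⟨i, by omega⟩) <
    shuffle A hA u v (Fin.natAdd j ⟨i + 1, hi⟩) ↔ _) = _
  simp only [shuffle_natAdd_lt_iff]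
  by_cases hv : v ⟨i, by omega⟩ < v ⟨i + 1, hi⟩ <;>
    rcases Nat.mod_two_eq_zero_or_one i with h | h <;>
    rcases Nat.mod_two_eq_zero_or_one j with h' | h' <;>
    simp [hv, h, h', Nat.add_mod]

end Shuffle

lemma shuffle_injective {j m : ℕ} :
    Function.Injective fun t : (Perm (Fin j) × Perm (Fin m)) ×
        {A : Finset (Fin (j + m)) // A.card = j} => shuffle t.2.1 t.2.2 t.1.1 t.1.2 := by
  rintro ⟨⟨u, v⟩, A, hA⟩ ⟨⟨u', v'⟩, A', hA'⟩ h
  simp only at h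
  obtain rfl : A = A' := by
    ext x
    obtain ⟨y, rfl⟩ := (shuffle A hA u v).surjective x
    rw [shuffle_mem_iff, h, shuffle_mem_iff]
  have hu : u = u' := Equiv.ext fun x => (A.orderIsoOfFin hA).injective <| Subtype.ext <| by
    simpa [shuffle_castAdd] using DFunLike.congr_fun h (Fin.castAdd m x)
  have hv : v = v' := Equiv.ext fun y =>
    (Aᶜ.orderIsoOfFin (card_compl_of_card_eq hA)).injective <| Subtype.ext <| by
      simpa [shuffle_natAdd] using DFunLike.congr_fun h (Fin.natAdd j y)
  rw [hu, hv]

theorem altDescCount_take_drop (j m : ℕ) (P Q : List Bool → Prop) :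
    altDescCount (j + m) (fun w => P (w.take (j - 1)) ∧ Q (w.drop j)) =
      (j + m).choose j * altDescCount j P * altDescCount m Q := by
  classical
  have hbij : Function.Bijective fun t : (Perm (Fin j) × Perm (Fin m)) ×
      {A : Finset (Fin (j + m)) // A.card = j} => shuffle t.2.1 t.2.2 t.1.1 t.1.2 := by
    refine (Fintype.bijective_iff_injective_and_card _).2 ⟨shuffle_injective, ?_⟩
    simp only [Fintype.card_prod, Fintype.card_perm, Fintype.card_fin, Fintype.card_finset_len]
    rw [← Nat.choose_mul_factorial_mul_factorial (Nat.le_add_right j m), Nat.add_sub_cancel_left]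
    ring
  calc altDescCount (j + m) (fun w => P (w.take (j - 1)) ∧ Q (w.drop j))
      = Nat.card {t : (Perm (Fin j) × Perm (Fin m)) × {A : Finset (Fin (j + m)) // A.card = j} //
          P (altDescents t.1.1) ∧ Q ((altDescents t.1.2).map (· ^^ decide (j % 2 = 1)))} :=
        (Nat.card_congr <| (Equiv.ofBijective _ hbij).subtypeEquiv fun t => by
          simp [altDescents_shuffle_take, altDescents_shuffle_drop]).symm
    _ = altDescCount j P * altDescCount m (fun w => Q (w.map (· ^^ decide (j % 2 = 1)))) *
          (j + m).choose j := by
        rw [Nat.card_congr (prodSubtypeFstEquivSubtypeProd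
            (p := fun p : Perm (Fin j) × Perm (Fin m) =>
              P (altDescents p.1) ∧ Q ((altDescents p.2).map (· ^^ decide (j % 2 = 1))))),
          Nat.card_prod,
          Nat.card_congr (subtypeProdEquivProd (p := fun u : Perm (Fin j) => P (altDescents u))
            (q := fun v : Perm (Fin m) => Q ((altDescents v).map (· ^^ decide (j % 2 = 1))))),
          Nat.card_prod]
        simp [altDescCount, Nat.card_eq_fintype_card, Fintype.card_finset_len]
    _ = (j + m).choose j * altDescCount j P * altDescCount m Q := by
        rw [altDescCount_map_xor]; ring

section Words

open List

lemma shortRuns_iff {v : List Bool} :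
    ShortRuns v ↔ v = [] ∨ (∃ v', v = true :: v' ∧ ShortRuns v') ∨
      ∃ v', v = false :: true :: v' ∧ ShortRuns v' := by
  match v with
  | [] => simpa [ShortRuns] using fun h => by simpa using h.length_le
  | true :: v => simp [ShortRuns, infix_cons_iff]
  | [false] => simp [ShortRuns]
  | false :: true :: v => simp [ShortRuns, infix_cons_iff]
  | false :: false :: v => simp [ShortRuns, infix_cons_iff]

/-- `w = 0ᵏ 1 v` with `ShortRuns v`: the first alternating run of the permutation has length
`k + 1`, and the rest of it has short runs. -/
def RunThenShortRuns (k : ℕ) (w : List Bool) : Prop :=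
  ∃ v, w = replicate k false ++ true :: v ∧ ShortRuns v

namespace RunThenShortRuns

variable {k : ℕ} {w : List Bool}

lemma getElem?_self (h : RunThenShortRuns k w) : w[k]? = some true := by
  obtain ⟨v, rfl, -⟩ := h
  simp

lemma getElem?_of_lt (h : RunThenShortRuns k w) {i : ℕ} (hi : i < k) : w[i]? = some false := by
  obtain ⟨v, rfl, -⟩ := h
  rw [getElem?_append_left (by simpa using hi)]
  simp [hi]

lemma length_gt (h : RunThenShortRuns k w) : k < w.length := by
  obtain ⟨v, rfl, -⟩ := h
  simp

lemma ne_replicate (h : RunThenShortRuns k w) (l : ℕ) : w ≠ replicate l false := by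
  rintro rfl
  simpa [getElem?_replicate] using h.getElem?_self

lemma unique {k' : ℕ} (h : RunThenShortRuns k w) (h' : RunThenShortRuns k' w) : k = k' := by
  by_contra hne
  rcases lt_or_gt_of_ne hne with hlt | hlt
  · simpa [h.getElem?_self] using h'.getElem?_of_lt hlt
  · simpa [h'.getElem?_self] using h.getElem?_of_lt hlt

end RunThenShortRuns

lemma exists_zeros_append_shortRuns_iff (k : ℕ) (w : List Bool) :
    (∃ v, w = replicate k false ++ v ∧ ShortRuns v) ↔
      w = replicate k false ∨ RunThenShortRuns k w ∨ RunThenShortRuns (k + 1) w := by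
  simp only [RunThenShortRuns]
  constructor
  · rintro ⟨v, rfl, hv⟩
    rcases shortRuns_iff.1 hv with rfl | ⟨v', rfl, hv'⟩ | ⟨v', rfl, hv'⟩
    · simp
    · exact .inr (.inl ⟨v', rfl, hv'⟩)
    · exact .inr (.inr ⟨v', by simp [replicate_succ'], hv'⟩)
  · rintro (rfl | ⟨v, rfl, hv⟩ | ⟨v, rfl, hv⟩)
    · exact ⟨[], by simp, shortRuns_iff.2 (.inl rfl)⟩
    · exact ⟨_, rfl, shortRuns_iff.2 (.inr (.inl ⟨v, rfl, hv⟩))⟩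
    · exact ⟨_, by simp [replicate_succ'], shortRuns_iff.2 (.inr (.inr ⟨v, rfl, hv⟩))⟩

lemma exists_zeros_cons_shortRuns_iff (k : ℕ) (w : List Bool) :
    (∃ b v, w = replicate k false ++ b :: v ∧ ShortRuns v) ↔
      RunThenShortRuns k w ∨ ∃ v, w = replicate (k + 1) false ++ v ∧ ShortRuns v := by
  simp only [RunThenShortRuns, replicate_succ', append_assoc, singleton_append]
  constructor
  · rintro ⟨(_ | _), v, rfl, hv⟩
    exacts [.inr ⟨v, rfl, hv⟩, .inl ⟨v, rfl, hv⟩]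
  · rintro (⟨v, rfl, hv⟩ | ⟨v, rfl, hv⟩)
    exacts [⟨true, v, rfl, hv⟩, ⟨false, v, rfl, hv⟩]

lemma take_eq_and_drop_succ_iff {α : Type*} {u w : List α} (hu : u.length < w.length)
    (Q : List α → Prop) :
    (w.take u.length = u ∧ Q (w.drop (u.length + 1))) ↔ ∃ b v, w = u ++ b :: v ∧ Q v := by
  constructor
  · rintro ⟨hw, hQ⟩
    refine ⟨w[u.length], _, ?_, hQ⟩
    nth_rw 1 [← take_append_drop u.length w]
    rw [hw, drop_eq_getElem_cons hu]
  · rintro ⟨b, v, rfl, hv⟩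
    simp [hv]

end Words

section Recursion

open List

variable {n : ℕ}

lemma altDescCount_runThenShortRuns_eq_zero {k : ℕ} (hk : n ≤ k + 1) :
    altDescCount n (RunThenShortRuns k) = 0 :=
  altDescCount_eq_zero fun _ hw h => by have := h.length_gt; omega

lemma altDescCount_eq_replicate_false (k : ℕ) :
    altDescCount n (· = replicate (k + 1) false) = if k + 2 = n then eulerNum n else 0 := by
  split_ifs with hk
  · subst hk
    rw [eulerNum_eq_altDescCount_false]
    rfl
  · exact altDescCount_eq_zero fun w hw h => by
      have := congrArg length h
      simp at this
      omega

/-- Split off the first alternating run, which has length `1` or `2`. -/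
lemma cCount_eq_add (hn : 2 ≤ n) :
    cCount n = altDescCount n (RunThenShortRuns 0) + altDescCount n (RunThenShortRuns 1) := by
  rw [cCount_eq_altDescCount (by omega), ← altDescCount_or fun w h h' => by
    simpa using h.unique h']
  refine altDescCount_congr fun w hw => ?_
  have := exists_zeros_append_shortRuns_iff 0 w
  simp only [replicate_zero, nil_append, exists_eq_left'] at this
  rw [this, or_iff_right (by rintro rfl; simp at hw; omega)]

/-- The left side counts the words `0ᵏ b v` with `ShortRuns v`, position `k + 1` being free. -/
lemma choose_mul_eulerNum_mul_cCount {k : ℕ} (hk : k + 2 ≤ n) :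
    n.choose (k + 1) * eulerNum (k + 1) * cCount (n - (k + 1)) =
      altDescCount n (RunThenShortRuns k) + altDescCount n (RunThenShortRuns (k + 1)) +
        altDescCount n (RunThenShortRuns (k + 2)) + if k + 2 = n then eulerNum n else 0 := by
  have hsplit := altDescCount_take_drop (k + 1) (n - (k + 1)) (· = replicate k false) ShortRuns
  rw [Nat.add_sub_cancel' (by omega)] at hsplit
  rw [eulerNum_eq_altDescCount_false, Nat.add_sub_cancel, cCount_eq_altDescCount (by omega),
    ← hsplit, ← altDescCount_eq_replicate_false]
  calc altDescCount n
        (fun w => w.take (k + 1 - 1) = replicate k false ∧ ShortRuns (w.drop (k + 1)))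
      = altDescCount n (fun w => RunThenShortRuns k w ∨ w = replicate (k + 1) false ∨
          RunThenShortRuns (k + 1) w ∨ RunThenShortRuns (k + 2) w) := by
        refine altDescCount_congr fun w hw => ?_
        have := take_eq_and_drop_succ_iff (u := replicate k false) (w := w) (by simp; omega)
          ShortRuns
        rw [length_replicate] at this
        rw [Nat.add_sub_cancel, this, exists_zeros_cons_shortRuns_iff,
          exists_zeros_append_shortRuns_iff]
    _ = _ := by
        rw [altDescCount_or, altDescCount_or, altDescCount_or]
        · ring
        · exact fun w h h' => by have := h.unique h'; omega
        · rintro w rfl (h | h) <;> exact h.ne_replicate _ rfl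
        · rintro w h (h' | h' | h')
          · exact h.ne_replicate _ h'
          all_goals have := h.unique h'; omega

end Recursion

def sign3 (n : ℕ) : ℤ := if n % 3 = 0 then 1 else if n % 3 = 1 then -1 else 0

lemma sign3_zero : sign3 0 = 1 := rfl

lemma sign3_mul_eq_ite (n : ℕ) (x : ℚ) :
    sign3 n * x = if n % 3 = 0 then x else if n % 3 = 1 then -x else 0 := by
  unfold sign3
  split_ifs <;> simp

lemma sign3_add_two_mul_eq_ite (n : ℕ) (x : ℚ) :
    sign3 (n + 2) * x = if n % 3 = 1 then x else if n % 3 = 2 then -x else 0 := by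
  unfold sign3
  split_ifs <;> first | omega | simp

lemma sign3_add_three (n : ℕ) : sign3 (n + 3) = sign3 n := by
  simp [sign3]

lemma sign3_add_sign3_add_sign3 (n : ℕ) :
    sign3 n + sign3 (n + 1) + sign3 (n + 2) = 0 := by
  rcases (by omega : n % 3 = 0 ∨ n % 3 = 1 ∨ n % 3 = 2) with h | h | h <;>
    simp [sign3, Nat.add_mod, h]

lemma sum_range_sign3_mul (K : ℕ → ℤ) (M : ℕ) :
    ∑ k ∈ Finset.range M, sign3 (k + 1) * (K k + K (k + 1) + K (k + 2)) =
      sign3 M * K (M + 1) - sign3 (M + 1) * K M - K 0 - K 1 := by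
  induction M with
  | zero => simp [sign3]
  | succ M ih =>
    rw [Finset.sum_range_succ, ih]
    linear_combination K (M + 1) * sign3_add_sign3_add_sign3 M

theorem sum_sign3_choose_eulerNum_cCount (n : ℕ) :
    ∑ d ∈ Finset.range (n + 1), sign3 d * (n.choose d * eulerNum d * cCount (n - d) : ℕ) =
      sign3 (n + 2) * eulerNum n := by
  match n with
  | 0 => simp [cCount_zero, sign3]
  | 1 => simp [Finset.sum_range_succ, cCount_zero, cCount_one, eulerNum_of_le_one, sign3]
  | n + 2 =>
    set K : ℕ → ℤ := fun k => altDescCount (n + 2) (RunThenShortRuns k)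
    have hterm : ∀ k ∈ Finset.range (n + 1),
        sign3 (k + 1) * ((n + 2).choose (k + 1) * eulerNum (k + 1) * cCount (n + 2 - (k + 1)) : ℕ)
          = sign3 (k + 1) * (K k + K (k + 1) + K (k + 2)) +
            if k = n then sign3 (n + 1) * eulerNum (n + 2) else 0 := by
      intro k hk
      rw [choose_mul_eulerNum_mul_cCount (by simp at hk; omega)]
      rcases eq_or_ne k n with rfl | h
      · simp only [K, if_true]
        push_cast
        ring
      · simp only [K, h, if_false, show k + 2 ≠ n + 2 by omega]
        push_cast
        ring
    rw [Finset.sum_range_succ', Finset.sum_range_succ, Finset.sum_congr rfl hterm,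
      Finset.sum_add_distrib, sum_range_sign3_mul, Finset.sum_ite_eq']
    have hK : K (n + 1) = 0 ∧ K (n + 2) = 0 := by
      simp [K, altDescCount_runThenShortRuns_eq_zero]
    rw [show n + 2 + 2 = n + 1 + 3 by ring, sign3_add_three]
    simp [hK, K, cCount_eq_add, cCount_zero, eulerNum_of_le_one, sign3_zero]
    ring

lemma sum_sign3_mul_eulerNum_div_mul_cCount_div (n : ℕ) :
    ∑ d ∈ Finset.range (n + 1), (sign3 d : ℚ) * ((eulerNum d : ℚ) / d.factorial) *
        ((cCount (n - d) : ℚ) / (n - d).factorial) =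
      sign3 (n + 2) * ((eulerNum n : ℚ) / n.factorial) := by
  have h := congrArg (fun z : ℤ => (z : ℚ) / n.factorial) (sum_sign3_choose_eulerNum_cCount n)
  push_cast at h
  rw [Finset.sum_div] at h
  convert h using 1
  · refine Finset.sum_congr rfl fun d hd => ?_
    rw [Nat.cast_choose ℚ (by simpa [Nat.lt_succ_iff] using hd)]
    field_simp
  · ring

/-- in `ℚ⟦X⟧`,
`(Σₙ (E_{3n}·X^{3n}/(3n)! − E_{3n+1}·X^{3n+1}/(3n+1)!)) · (Σₙ c(n)·Xⁿ/n!)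
  = Σₙ (E_{3n+1}·X^{3n+1}/(3n+1)! − E_{3n+2}·X^{3n+2}/(3n+2)!)`. -/
theorem statement17 :
    (PowerSeries.mk (fun n : ℕ =>
        if n % 3 = 0 then (eulerNum n : ℚ) / n.factorial
        else if n % 3 = 1 then -((eulerNum n : ℚ) / n.factorial)
        else 0)) *
      (PowerSeries.mk (fun n : ℕ => (cCount n : ℚ) / n.factorial)) =
    PowerSeries.mk (fun n : ℕ =>
        if n % 3 = 1 then (eulerNum n : ℚ) / n.factorial
        else if n % 3 = 2 then -((eulerNum n : ℚ) / n.factorial)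
        else 0) := by
  simp only [← sign3_mul_eq_ite, ← sign3_add_two_mul_eq_ite]
  ext n
  rw [PowerSeries.coeff_mul, Finset.Nat.sum_antidiagonal_eq_sum_range_succ
    (fun a b => PowerSeries.coeff a _ * PowerSeries.coeff b _)]
  simpa using sum_sign3_mul_eulerNum_div_mul_cCount_div n
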